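/- (Signal–noise separation example.) Let d ≥ 1, let v ∈ ℝ^d be a unit vector, and let σ ∈ (0,1]. Let s be uniform on {v, −v}, let n ∼ N(0, σ²·I_d) be independent of s, and set x := s + n. Then the covariance of x is Σ := E[xxᵀ] = vvᵀ + σ²·I_d, with top eigenvalue λ₁ = 1+σ², top eigenvector v, and second eigenvalue λ₂ = σ². Moreover, there exists a universal constant C > 0 such that ‖E[(xxᵀ−Σ)(xxᵀ−Σ)ᵀ]‖₂ ≤ C·d·σ², and for every unit vector u ∈ ℝ^d, ‖E[(xxᵀ−Σ)uuᵀ(xxᵀ−Σ)ᵀ]‖₂ ≤ C·σ². -/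

import Mathlib

open MeasureTheory ProbabilityTheory Real Matrix
open scoped ENNReal NNReal Classical

noncomputable section

/-- Euclidean vectors in `ℝ^d`. -/
abbrev Vec (d : ℕ) : Type := EuclideanSpace ℝ (Fin d)

/-- `d × d` real matrices. -/
abbrev Mat (d : ℕ) : Type := Matrix (Fin d) (Fin d) ℝ

instance matMeasurableSpace {d : ℕ} : MeasurableSpace (Mat d) := MeasurableSpace.pi

/-- The spectral (ℓ₂-operator) norm of a matrix. -/
noncomputable def specNorm {d : ℕ} (A : Mat d) : ℝ :=
  ‖Matrix.toEuclideanCLM (𝕜 := ℝ) A‖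

/-- Matrix-vector multiplication, as a map on Euclidean space. -/
noncomputable def mulVecE {d : ℕ} (A : Mat d) (u : Vec d) : Vec d :=
  Matrix.toEuclideanCLM (𝕜 := ℝ) A u

/-- Reinterpret a Euclidean vector as a plain function. -/
def toVec' {d : ℕ} (u : Vec d) : Fin d → ℝ := u

/-- Real inner product on `ℝ^d`. -/
noncomputable def iprod {d : ℕ} (u v : Vec d) : ℝ := @inner ℝ _ _ u v

/-- Outer product `u vᵀ`. -/
def outer {d : ℕ} (u v : Vec d) : Mat d :=
  Matrix.vecMulVec (toVec' u) (toVec' v)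

/-- Entrywise expectation of a random matrix. -/
noncomputable def matExp {Ω : Type*} [MeasurableSpace Ω] {d : ℕ} (μ : Measure Ω)
    (A : Ω → Mat d) : Mat d :=
  Matrix.of fun i j => ∫ ω, A ω i j ∂μ

/-- The matrix `H_u = lam1⁻² E[(A-Σ) u uᵀ (A-Σ)ᵀ]` of Assumption A.4. -/
noncomputable def Hmat {Ω : Type*} [MeasurableSpace Ω] {d : ℕ} (μ : Measure Ω)
    (A : Ω → Mat d) (Sm : Mat d) (lam1 : ℝ) (u : Vec d) : Mat d :=
  (lam1 ^ 2)⁻¹ • matExp μ fun ω => (A ω - Sm) * outer u u * (A ω - Sm)ᵀ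

/-- `sin²` of the angle between two (nonzero) vectors. -/
noncomputable def sinSq {d : ℕ} (u v : Vec d) : ℝ :=
  1 - iprod u (v) ^ 2 / (‖u‖ ^ 2 * ‖v‖ ^ 2)

/-- `sin` of the angle between two unit vectors. -/
noncomputable def sinU {d : ℕ} (u v : Vec d) : ℝ :=
  Real.sqrt (1 - iprod u (v) ^ 2)

/-- Standard Gaussian measure on `ℝ^d` (as Euclidean space). -/
noncomputable def stdGaussianE (d : ℕ) : Measure (Vec d) :=
  (Measure.pi fun _ : Fin d => gaussianReal 0 1).map (EuclideanSpace.equiv (Fin d) ℝ).symm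

/-- `P` is the centered Gaussian measure with covariance matrix `S`, characterized through its
one-dimensional projections (Cramér–Wold). -/
def IsGaussianMeasure {d : ℕ} (P : Measure (Vec d)) (S : Mat d) : Prop :=
  IsProbabilityMeasure P ∧
    ∀ u : Vec d, P.map (fun x => iprod u (x)) = gaussianReal 0 (iprod u (mulVecE S u)).toNNReal

/-- Two datasets are neighboring if they differ in at most one entry. -/
def Neighboring {n : ℕ} {X : Type*} (S S' : Fin n → X) : Prop :=
  ∃ i₀, ∀ i, i ≠ i₀ → S i = S' i

/-- `(ε,δ)`-differential privacy of a randomized estimator mapping `n` points of `ℝ^d`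
to the unit sphere. -/
def DiffPrivate {n d : ℕ} (M : Kernel (Fin n → Vec d) (Metric.sphere (0 : Vec d) 1))
    (ε δ : ℝ) : Prop :=
  ∀ S S' : Fin n → Vec d, Neighboring S S' →
    ∀ B : Set (Metric.sphere (0 : Vec d) 1), MeasurableSet B →
      M S B ≤ ENNReal.ofReal (Real.exp ε) * M S' B + ENNReal.ofReal δ

/-- Clipping to norm at most `β`. -/
noncomputable def clipV {d : ℕ} (β : ℝ) (x : Vec d) : Vec d :=
  haveI := Classical.propDecidable (x = 0)
  if x = 0 then 0 else (min 1 (β / ‖x‖)) • x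

/-- Covariance (second-moment) matrix of a measure on `ℝ^d`. -/
noncomputable def covMatrix {d : ℕ} (P : Measure (Vec d)) : Mat d :=
  Matrix.of fun i j => ∫ x, toVec' x i * toVec' x j ∂P

end


/-!
Both components of the mixture, `±v + σ g`, have independent Gaussian coordinates with means `±v`
and variance `σ²`. Their second and fourth mixed moments are even in the mean (Isserlis' theorem
with means), so `P` has the moments of `N(v, σ² I)` up to order four. These moments alone determine
`E[(xxᵀ - Σ) A (xxᵀ - Σ)ᵀ]` for every matrix `A`, as an explicit combination of `vvᵀ`, `I`, `A`
and rank-one terms, whose spectral norm is at most `σ²(|tr A| + 3‖A‖) + σ⁴(|tr A| + ‖A‖)`. Taking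
`A = I` (trace `d`) and `A = uuᵀ` (trace `1`) gives both bounds with `C = 6`.
-/

open Finset
open scoped Nat

lemma integral_pow_two_mul_gaussianReal_zero_one (j : ℕ) :
    ∫ x, x ^ (2 * j) ∂gaussianReal 0 1 = (2 * j - 1 : ℕ)‼ := by
  have hint := integral_rpow_mul_exp_neg_mul_rpow (p := 2) (q := (2 * j : ℕ)) (b := 1 / 2)
    two_pos (by linarith [Nat.cast_nonneg (α := ℝ) (2 * j)]) one_half_pos
  have hpdf (x : ℝ) : gaussianPDFReal 0 1 x • x ^ (2 * j)
      = (√(2 * π))⁻¹ * (|x| ^ ((2 * j : ℕ) : ℝ) * exp (-(1 / 2) * |x| ^ (2 : ℝ))) := by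
    rw [gaussianPDFReal, rpow_natCast, rpow_two, sq_abs, pow_mul |x|, sq_abs, ← pow_mul,
      smul_eq_mul]
    push_cast
    ring_nf
  have hpow : (1 / 2 : ℝ) ^ (-((2 * j : ℕ) + 1 : ℝ) / 2) = 2 ^ j * √2 := by
    rw [one_div, inv_rpow zero_le_two, ← rpow_neg zero_le_two, sqrt_eq_rpow, ← rpow_natCast,
      ← rpow_add two_pos]
    push_cast
    ring_nf
  rw [integral_gaussianReal_eq_integral_smul one_ne_zero]
  simp_rw [hpdf]
  rw [integral_const_mul,
    integral_comp_abs (f := fun t => t ^ ((2 * j : ℕ) : ℝ) * exp (-(1 / 2) * t ^ (2 : ℝ))), hint,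
    hpow, show ((2 * j : ℕ) + 1 : ℝ) / 2 = j + 1 / 2 by push_cast; ring, Gamma_nat_add_half,
    sqrt_mul zero_le_two]
  field_simp

lemma integral_pow_gaussianReal_zero_of_odd (v : ℝ≥0) {n : ℕ} (hn : Odd n) :
    ∫ x, x ^ n ∂gaussianReal 0 v = 0 := by
  have h := integral_map (μ := gaussianReal 0 v) (f := fun x : ℝ => x ^ n)
    measurable_neg.aemeasurable (by fun_prop)
  rw [gaussianReal_map_neg, neg_zero] at h
  simp only [hn.neg_pow, integral_neg] at h
  linarith

lemma gaussianReal_zero_eq_map_const_mul (v : ℝ≥0) :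
    gaussianReal 0 v = (gaussianReal 0 1).map (√(v : ℝ) * ·) := by
  rw [gaussianReal_map_const_mul, mul_zero, mul_one]
  congr
  ext
  simp

lemma integral_pow_gaussianReal_zero (v : ℝ≥0) (n : ℕ) :
    ∫ x, x ^ n ∂gaussianReal 0 v = if Even n then (v : ℝ) ^ (n / 2) * (n - 1 : ℕ)‼ else 0 := by
  obtain ⟨j, rfl⟩ | hn := Nat.even_or_odd n
  · rw [if_pos ⟨j, rfl⟩, gaussianReal_zero_eq_map_const_mul,
      integral_map (by fun_prop) (by fun_prop)]
    simp_rw [← two_mul, mul_pow, integral_const_mul, integral_pow_two_mul_gaussianReal_zero_one]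
    rw [pow_mul, sq_sqrt v.coe_nonneg, Nat.mul_div_cancel_left j two_pos]
  · rw [if_neg (Nat.not_even_iff_odd.mpr hn), integral_pow_gaussianReal_zero_of_odd v hn]

lemma integrable_pow_gaussianReal (μ : ℝ) (v : ℝ≥0) (n : ℕ) :
    Integrable (fun x => x ^ n) (gaussianReal μ v) :=
  integrable_pow_of_mem_interior_integrableExpSet (by simp) n

lemma integral_pow_gaussianReal (μ : ℝ) (v : ℝ≥0) (n : ℕ) :
    ∫ x, x ^ n ∂gaussianReal μ v =
      ∑ k ∈ range (n + 1), (∫ x, x ^ k ∂gaussianReal 0 v) * μ ^ (n - k) * n.choose k := by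
  have h := gaussianReal_map_add_const (μ := 0) (v := v) μ
  rw [zero_add] at h
  rw [← h, integral_map (by fun_prop) (by fun_prop)]
  simp_rw [add_pow]
  rw [integral_finsetSum _ fun k _ =>
    ((integrable_pow_gaussianReal 0 v k).mul_const _).mul_const _]
  simp_rw [integral_mul_const]

lemma integral_sq_gaussianReal (μ : ℝ) (v : ℝ≥0) :
    ∫ x, x ^ 2 ∂gaussianReal μ v = μ ^ 2 + v := by
  rw [integral_pow_gaussianReal]
  simp only [sum_range_succ, sum_range_zero, integral_pow_gaussianReal_zero]
  norm_num

lemma integral_pow_three_gaussianReal (μ : ℝ) (v : ℝ≥0) :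
    ∫ x, x ^ 3 ∂gaussianReal μ v = μ ^ 3 + 3 * μ * v := by
  rw [integral_pow_gaussianReal]
  simp only [sum_range_succ, sum_range_zero, integral_pow_gaussianReal_zero]
  norm_num [Nat.choose, Nat.doubleFactorial]
  ring

lemma integral_pow_four_gaussianReal (μ : ℝ) (v : ℝ≥0) :
    ∫ x, x ^ 4 ∂gaussianReal μ v = μ ^ 4 + 6 * μ ^ 2 * v + 3 * v ^ 2 := by
  rw [integral_pow_gaussianReal]
  simp only [sum_range_succ, sum_range_zero, integral_pow_gaussianReal_zero]
  norm_num [Nat.choose, Nat.doubleFactorial]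
  ring

section Moment4

variable {ι : Type*} [DecidableEq ι]

/-- `E[xᵢ xⱼ xₖ xₗ]` for `x ∼ N(m, s I)` (Isserlis' theorem with means). -/
noncomputable def gaussianMoment4 (m : ι → ℝ) (s : ℝ) (i j k l : ι) : ℝ :=
  let δ : Matrix ι ι ℝ := 1
  m i * m j * m k * m l
    + s * (δ i j * (m k * m l) + δ i k * (m j * m l) + δ i l * (m j * m k)
      + δ j k * (m i * m l) + δ j l * (m i * m k) + δ k l * (m i * m j))
    + s ^ 2 * (δ i j * δ k l + δ i k * δ j l + δ i l * δ j k)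

lemma gaussianMoment4_neg (m : ι → ℝ) (s : ℝ) (i j k l : ι) :
    gaussianMoment4 (-m) s i j k l = gaussianMoment4 m s i j k l := by
  simp only [gaussianMoment4, Pi.neg_apply]
  ring

lemma gaussianMoment4_sub_mul (m : ι → ℝ) (s : ℝ) (i k j l : ι) :
    let δ : Matrix ι ι ℝ := 1
    gaussianMoment4 m s i k j l - (m i * m k + s * δ i k) * (m j * m l + s * δ j l) =
      s * (δ i j * (m k * m l) + δ i l * (m k * m j) + δ k j * (m i * m l) + δ k l * (m i * m j))
        + s ^ 2 * (δ i j * δ k l + δ i l * δ k j) := by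
  simp only [gaussianMoment4]
  ring

end Moment4

section GaussianPi

variable {ι : Type*} [Fintype ι]

noncomputable def gaussianPi (m : ι → ℝ) (s : ℝ≥0) : Measure (ι → ℝ) :=
  Measure.pi fun t => gaussianReal (m t) s

instance (m : ι → ℝ) (s : ℝ≥0) : IsProbabilityMeasure (gaussianPi m s) := by
  unfold gaussianPi; infer_instance

lemma integrable_prod_pow_gaussianPi (m : ι → ℝ) (s : ℝ≥0) (n : ι → ℕ) :
    Integrable (fun x => ∏ t, x t ^ n t) (gaussianPi m s) :=
  Integrable.fintype_prod fun t => integrable_pow_gaussianReal (m t) s (n t)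

lemma integral_prod_pow_gaussianPi (m : ι → ℝ) (s : ℝ≥0) (n : ι → ℕ) :
    ∫ x, ∏ t, x t ^ n t ∂gaussianPi m s = ∏ t, ∫ y, y ^ n t ∂gaussianReal (m t) s :=
  integral_fintype_prod_eq_prod fun t y => y ^ n t

variable [DecidableEq ι]

lemma integral_mul_gaussianPi (m : ι → ℝ) (s : ℝ≥0) (i j : ι) :
    Integrable (fun x => x i * x j) (gaussianPi m s) ∧
      ∫ x, x i * x j ∂gaussianPi m s = m i * m j + s * (1 : Matrix ι ι ℝ) i j := by
  have h : (fun x : ι → ℝ => x i * x j) =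
      fun x => ∏ t, x t ^ ((if i = t then 1 else 0) + (if j = t then 1 else 0)) := by
    ext x; simp only [pow_add, prod_mul_distrib, prod_pow_boole, mem_univ, if_true]
  rw [h]
  refine ⟨integrable_prod_pow_gaussianPi m s _, ?_⟩
  rw [integral_prod_pow_gaussianPi, ← prod_subset (subset_univ {i, j}) fun t _ ht => by
    simp only [mem_insert, mem_singleton, not_or] at ht
    simp [Ne.symm ht.1, Ne.symm ht.2]]
  by_cases hij : i = j
  · subst hij; simp [integral_sq_gaussianReal, ← sq]
  · simp [prod_insert, hij, Ne.symm hij]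

lemma integral_mul_mul_mul_gaussianPi (m : ι → ℝ) (s : ℝ≥0) (i j k l : ι) :
    Integrable (fun x => x i * x j * x k * x l) (gaussianPi m s) ∧
      ∫ x, x i * x j * x k * x l ∂gaussianPi m s = gaussianMoment4 m s i j k l := by
  have h : (fun x : ι → ℝ => x i * x j * x k * x l) = fun x => ∏ t, x t ^
      ((if i = t then 1 else 0) + (if j = t then 1 else 0) + (if k = t then 1 else 0)
        + (if l = t then 1 else 0)) := by
    ext x; simp only [pow_add, prod_mul_distrib, prod_pow_boole, mem_univ, if_true]
  rw [h]
  refine ⟨integrable_prod_pow_gaussianPi m s _, ?_⟩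
  rw [integral_prod_pow_gaussianPi, ← prod_subset (subset_univ {i, j, k, l}) fun t _ ht => by
    simp only [mem_insert, mem_singleton, not_or] at ht
    simp [Ne.symm ht.1, Ne.symm ht.2.1, Ne.symm ht.2.2.1, Ne.symm ht.2.2.2]]
  by_cases hij : i = j <;> by_cases hik : i = k <;> by_cases hil : i = l <;>
    by_cases hjk : j = k <;> by_cases hjl : j = l <;> by_cases hkl : k = l <;>
    subst_vars <;>
    simp [gaussianMoment4, prod_insert, *, Ne.symm, integral_sq_gaussianReal,
      integral_pow_three_gaussianReal, integral_pow_four_gaussianReal] <;>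
    ring

end GaussianPi

variable {d : ℕ}

structure HasGaussianEvenMoments (μ : Measure (Vec d)) (m : Vec d) (s : ℝ) : Prop where
  integrable_mul (i j : Fin d) : Integrable (fun x : Vec d => x i * x j) μ
  integral_mul (i j : Fin d) : ∫ x, x i * x j ∂μ = m i * m j + s * (1 : Mat d) i j
  integrable_mul_mul_mul (i j k l : Fin d) :
    Integrable (fun x : Vec d => x i * x j * x k * x l) μ
  integral_mul_mul_mul (i j k l : Fin d) :
    ∫ x, x i * x j * x k * x l ∂μ = gaussianMoment4 (⇑m) s i j k l

noncomputable def gaussianVec (m : Vec d) (s : ℝ≥0) : Measure (Vec d) :=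
  (gaussianPi (⇑m) s).map (MeasurableEquiv.toLp 2 (Fin d → ℝ))

instance (m : Vec d) (s : ℝ≥0) : IsProbabilityMeasure (gaussianVec m s) :=
  Measure.isProbabilityMeasure_map (by fun_prop)

lemma hasGaussianEvenMoments_gaussianVec (m : Vec d) (s : ℝ≥0) :
    HasGaussianEvenMoments (gaussianVec m s) m s :=
  let e := (MeasurableEquiv.toLp 2 (Fin d → ℝ)).measurableEmbedding
  { integrable_mul i j := e.integrable_map_iff.mpr (integral_mul_gaussianPi (⇑m) s i j).1
    integral_mul i j := by
      rw [gaussianVec, e.integral_map]; exact (integral_mul_gaussianPi (⇑m) s i j).2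
    integrable_mul_mul_mul i j k l :=
      e.integrable_map_iff.mpr (integral_mul_mul_mul_gaussianPi (⇑m) s i j k l).1
    integral_mul_mul_mul i j k l := by
      rw [gaussianVec, e.integral_map]; exact (integral_mul_mul_mul_gaussianPi (⇑m) s i j k l).2 }

lemma gaussianReal_map_const_add_const_mul (a σ : ℝ) :
    (gaussianReal 0 1).map (fun y => a + σ * y) = gaussianReal a (.mk (σ ^ 2) (sq_nonneg σ)) := by
  have h : (fun y => a + σ * y) = (a + ·) ∘ (σ * ·) := rfl
  rw [h, ← Measure.map_map (by fun_prop) (by fun_prop), gaussianReal_map_const_mul,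
    gaussianReal_map_const_add, mul_zero, zero_add, mul_one]

lemma map_add_map_smul_stdGaussianE (a : Vec d) (σ : ℝ) :
    ((stdGaussianE d).map (σ • ·)).map (a + ·) = gaussianVec a (.mk (σ ^ 2) (sq_nonneg σ)) := by
  have h : (fun x : Vec d => a + x) ∘ (fun x => σ • x) ∘ (EuclideanSpace.equiv (Fin d) ℝ).symm
      = (MeasurableEquiv.toLp 2 (Fin d → ℝ)) ∘ fun g t => a t + σ * g t := by
    ext g t; simp
  rw [stdGaussianE, Measure.map_map (by fun_prop) (by fun_prop),
    Measure.map_map (by fun_prop) (by fun_prop), Function.comp_assoc, h,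
    ← Measure.map_map (MeasurableEquiv.toLp 2 (Fin d → ℝ)).measurable (by fun_prop),
    Measure.pi_map_pi (f := fun t y => a t + σ * y) fun _ => by fun_prop]
  simp only [gaussianReal_map_const_add_const_mul, gaussianVec, gaussianPi]

/-- `E[(xxᵀ - Σ) A (xxᵀ - Σ)ᵀ]` for `x ∼ N(m, s I)` and `Σ = mmᵀ + s I`. -/
noncomputable def gaussianSandwich (A : Mat d) (m : Vec d) (s : ℝ) : Mat d :=
  s • (A.trace • outer m m + outer m (mulVecE A m) + outer (mulVecE Aᵀ m) m
    + iprod m (mulVecE A m) • 1) + s ^ 2 • (A.trace • 1 + Aᵀ)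

lemma sum_sum_mul_gaussianMoment4_sub (A : Mat d) (m : Vec d) (s : ℝ) (i j : Fin d) :
    let S := outer m m + s • (1 : Mat d)
    ∑ l, ∑ k, A k l * (gaussianMoment4 (⇑m) s i k j l - S i k * S j l) =
      gaussianSandwich A m s i j := by
  intro S
  set δ : Mat d := 1
  have hS (a b : Fin d) : S a b = m a * m b + s * δ a b := rfl
  have hq : ∑ l, ∑ k, A k l * (m k * m l) = iprod m (mulVecE A m) := by
    have : ∀ l, mulVecE A m l = ∑ k, A l k * m k := fun _ => rfl
    simp only [iprod, PiLp.inner_apply, this, RCLike.inner_apply, conj_trivial, sum_mul]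
    rw [sum_comm]
    exact sum_congr rfl fun l _ => sum_congr rfl fun k _ => by ring
  have hAT : ∑ l, ∑ k, A k l * (δ i l * (m k * m j)) = mulVecE Aᵀ m i * m j := by
    change _ = (∑ k, A k i * m k) * m j
    simp [δ, Matrix.one_apply, sum_mul, mul_assoc]
  have hA : ∑ l, ∑ k, A k l * (δ k j * (m i * m l)) = m i * mulVecE A m j := by
    change _ = m i * ∑ l, A j l * m l
    simp [δ, Matrix.one_apply, mul_sum, mul_left_comm]
  have htr : ∑ l, ∑ k, A k l * δ k l = A.trace := by
    simp [δ, Matrix.one_apply, Matrix.trace]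
  have hji : ∑ l, ∑ k, A k l * (δ i l * δ k j) = A j i := by
    simp [δ, Matrix.one_apply]
  calc ∑ l, ∑ k, A k l * (gaussianMoment4 (⇑m) s i k j l - S i k * S j l)
      = ∑ l, ∑ k, (s * δ i j * (A k l * (m k * m l)) + s * (A k l * (δ i l * (m k * m j)))
          + s * (A k l * (δ k j * (m i * m l))) + s * (m i * m j) * (A k l * δ k l)
          + s ^ 2 * δ i j * (A k l * δ k l) + s ^ 2 * (A k l * (δ i l * δ k j))) := by
        refine sum_congr rfl fun l _ => sum_congr rfl fun k _ => ?_
        rw [hS, hS, gaussianMoment4_sub_mul]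
        ring
    _ = s * δ i j * iprod m (mulVecE A m) + s * (mulVecE Aᵀ m i * m j)
          + s * (m i * mulVecE A m j) + s * (m i * m j) * A.trace + s ^ 2 * δ i j * A.trace
          + s ^ 2 * A j i := by
        simp only [sum_add_distrib, ← mul_sum, hq, hAT, hA, htr, hji]
    _ = _ := by
        simp only [gaussianSandwich, Matrix.add_apply, Matrix.smul_apply, outer, toVec',
          Matrix.vecMulVec_apply, Matrix.transpose_apply, smul_eq_mul, δ]
        ring

namespace HasGaussianEvenMoments

variable {μ ν : Measure (Vec d)} {m : Vec d} {s : ℝ}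

lemma of_neg (h : HasGaussianEvenMoments μ (-m) s) : HasGaussianEvenMoments μ m s where
  integrable_mul := h.integrable_mul
  integral_mul i j := by rw [h.integral_mul]; simp
  integrable_mul_mul_mul := h.integrable_mul_mul_mul
  integral_mul_mul_mul i j k l := by
    rw [h.integral_mul_mul_mul, WithLp.ofLp_neg, gaussianMoment4_neg]

lemma smul_add_smul (hμ : HasGaussianEvenMoments μ m s) (hν : HasGaussianEvenMoments ν m s)
    {a b : ℝ≥0∞} (hab : a + b = 1) : HasGaussianEvenMoments (a • μ + b • ν) m s := by
  have ha : a ≠ ∞ := ne_top_of_le_ne_top ENNReal.one_ne_top (hab ▸ le_self_add)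
  have hb : b ≠ ∞ := ne_top_of_le_ne_top ENNReal.one_ne_top (hab ▸ le_add_self)
  have hab' : a.toReal + b.toReal = 1 := by
    rw [← ENNReal.toReal_add ha hb, hab, ENNReal.toReal_one]
  have mix {f : Vec d → ℝ} {c : ℝ} (hfμ : Integrable f μ) (hfν : Integrable f ν)
      (hcμ : ∫ x, f x ∂μ = c) (hcν : ∫ x, f x ∂ν = c) :
      Integrable f (a • μ + b • ν) ∧ ∫ x, f x ∂(a • μ + b • ν) = c := by
    refine ⟨(hfμ.smul_measure ha).add_measure (hfν.smul_measure hb), ?_⟩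
    rw [integral_add_measure (hfμ.smul_measure ha) (hfν.smul_measure hb), integral_smul_measure,
      integral_smul_measure, hcμ, hcν, smul_eq_mul, smul_eq_mul, ← add_mul, hab', one_mul]
  have mix₂ i j := mix (hμ.integrable_mul i j) (hν.integrable_mul i j)
    (hμ.integral_mul i j) (hν.integral_mul i j)
  have mix₄ i j k l := mix (hμ.integrable_mul_mul_mul i j k l)
    (hν.integrable_mul_mul_mul i j k l) (hμ.integral_mul_mul_mul i j k l)
    (hν.integral_mul_mul_mul i j k l)
  exact ⟨fun i j => (mix₂ i j).1, fun i j => (mix₂ i j).2, fun i j k l => (mix₄ i j k l).1,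
    fun i j k l => (mix₄ i j k l).2⟩

lemma covMatrix_eq (h : HasGaussianEvenMoments μ m s) : covMatrix μ = outer m m + s • 1 := by
  ext i j
  exact h.integral_mul i j

lemma integral_sub_mul_sub [IsProbabilityMeasure μ] (h : HasGaussianEvenMoments μ m s)
    (a b : ℝ) (i k j l : Fin d) :
    Integrable (fun x : Vec d => (x i * x k - a) * (x j * x l - b)) μ ∧
      ∫ x, (x i * x k - a) * (x j * x l - b) ∂μ =
        gaussianMoment4 (⇑m) s i k j l - b * (m i * m k + s * (1 : Mat d) i k)
          - a * (m j * m l + s * (1 : Mat d) j l) + a * b := by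
  have hf : (fun x : Vec d => (x i * x k - a) * (x j * x l - b))
      = fun x => x i * x k * x j * x l - b * (x i * x k) - a * (x j * x l) + a * b := by
    ext x; ring
  have h₁ : Integrable (fun x : Vec d => x i * x k * x j * x l - b * (x i * x k)) μ :=
    (h.integrable_mul_mul_mul i k j l).sub ((h.integrable_mul i k).const_mul b)
  have h₂ : Integrable
      (fun x : Vec d => x i * x k * x j * x l - b * (x i * x k) - a * (x j * x l)) μ :=
    h₁.sub ((h.integrable_mul j l).const_mul a)
  rw [hf]
  refine ⟨h₂.add (integrable_const _), ?_⟩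
  rw [integral_add h₂ (integrable_const _), integral_sub h₁ ((h.integrable_mul j l).const_mul a),
    integral_sub (h.integrable_mul_mul_mul i k j l) ((h.integrable_mul i k).const_mul b),
    integral_const_mul, integral_const_mul, h.integral_mul_mul_mul, h.integral_mul,
    h.integral_mul, integral_const, probReal_univ, one_smul]

lemma matExp_sandwich [IsProbabilityMeasure μ] (h : HasGaussianEvenMoments μ m s) (A : Mat d) :
    let S := outer m m + s • (1 : Mat d)
    matExp μ (fun x => (outer x x - S) * A * (outer x x - S)ᵀ) = gaussianSandwich A m s := by
  intro S
  ext i j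
  have hentry (x : Vec d) : ((outer x x - S) * A * (outer x x - S)ᵀ) i j =
      ∑ l, ∑ k, A k l * ((x i * x k - S i k) * (x j * x l - S j l)) := by
    simp only [Matrix.mul_apply, Matrix.transpose_apply, Matrix.sub_apply, sum_mul]
    refine sum_congr rfl fun l _ => sum_congr rfl fun k _ => ?_
    simp only [outer, toVec', Matrix.vecMulVec_apply]
    ring
  have hint l k := ((h.integral_sub_mul_sub (S i k) (S j l) i k j l).1).const_mul (A k l)
  simp only [matExp, Matrix.of_apply, hentry]
  rw [integral_finsetSum _ fun l _ => integrable_finsetSum _ fun k _ => hint l k]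
  simp only [integral_finsetSum _ fun k _ => hint _ k, integral_const_mul,
    (h.integral_sub_mul_sub _ _ i _ j _).2]
  rw [← sum_sum_mul_gaussianMoment4_sub]
  refine sum_congr rfl fun l _ => sum_congr rfl fun k _ => ?_
  simp only [S, Matrix.add_apply, Matrix.smul_apply, outer, toVec', Matrix.vecMulVec_apply,
    smul_eq_mul]
  ring

end HasGaussianEvenMoments

section SpecNorm
open scoped Matrix.Norms.L2Operator

lemma specNorm_eq_norm (A : Mat d) : specNorm A = ‖A‖ := rfl

lemma specNorm_add_le (A B : Mat d) : specNorm (A + B) ≤ specNorm A + specNorm B :=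
  norm_add_le A B

lemma specNorm_smul (r : ℝ) (A : Mat d) : specNorm (r • A) = |r| * specNorm A := by
  rw [specNorm_eq_norm, norm_smul, Real.norm_eq_abs, specNorm_eq_norm]

lemma specNorm_outer (a b : Vec d) : specNorm (outer a b) = ‖a‖ * ‖b‖ := by
  have h : outer a b = Matrix.toEuclideanLin.symm (InnerProductSpace.rankOne ℝ a b) := by
    rw [InnerProductSpace.symm_toEuclideanLin_rankOne]; rfl
  rw [specNorm_eq_norm, h, Matrix.l2_opNorm_def, LinearEquiv.trans_apply,
    LinearEquiv.apply_symm_apply]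
  exact InnerProductSpace.norm_rankOne a b

lemma specNorm_one_le : specNorm (1 : Mat d) ≤ 1 := by
  rw [specNorm, map_one]
  exact ContinuousLinearMap.norm_id_le

lemma specNorm_transpose (A : Mat d) : specNorm Aᵀ = specNorm A := by
  rw [specNorm_eq_norm, specNorm_eq_norm, ← Matrix.conjTranspose_eq_transpose_of_trivial,
    Matrix.l2_opNorm_conjTranspose]

end SpecNorm

lemma norm_mulVecE_le (A : Mat d) (u : Vec d) : ‖mulVecE A u‖ ≤ specNorm A * ‖u‖ :=
  (Matrix.toEuclideanCLM (𝕜 := ℝ) A).le_opNorm u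

lemma specNorm_gaussianSandwich_le (A : Mat d) {m : Vec d} (hm : ‖m‖ = 1) {s : ℝ} (hs : 0 ≤ s) :
    specNorm (gaussianSandwich A m s) ≤
      s * (|A.trace| + 3 * specNorm A) + s ^ 2 * (|A.trace| + specNorm A) := by
  have hAm : ‖mulVecE A m‖ ≤ specNorm A := by simpa [hm] using norm_mulVecE_le A m
  have hATm : ‖mulVecE Aᵀ m‖ ≤ specNorm A := by
    simpa [hm, specNorm_transpose] using norm_mulVecE_le Aᵀ m
  have hq : |iprod m (mulVecE A m)| ≤ specNorm A :=
    (abs_real_inner_le_norm _ _).trans (by rw [hm, one_mul]; exact hAm)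
  have h1 : specNorm (A.trace • outer m m + outer m (mulVecE A m) + outer (mulVecE Aᵀ m) m
      + iprod m (mulVecE A m) • (1 : Mat d)) ≤ |A.trace| + 3 * specNorm A := by
    refine ((specNorm_add_le _ _).trans (add_le_add_left ((specNorm_add_le _ _).trans
      (add_le_add_left (specNorm_add_le _ _) _)) _)).trans ?_
    rw [specNorm_smul, specNorm_smul, specNorm_outer, specNorm_outer, specNorm_outer, hm]
    have := mul_le_mul_of_nonneg_left (specNorm_one_le (d := d))
      (abs_nonneg (iprod m (mulVecE A m)))
    linarith
  have h2 : specNorm (A.trace • (1 : Mat d) + Aᵀ) ≤ |A.trace| + specNorm A := by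
    refine (specNorm_add_le _ _).trans ?_
    rw [specNorm_smul, specNorm_transpose]
    linarith [mul_le_mul_of_nonneg_left (specNorm_one_le (d := d)) (abs_nonneg A.trace)]
  calc specNorm (gaussianSandwich A m s)
      ≤ s * specNorm (A.trace • outer m m + outer m (mulVecE A m) + outer (mulVecE Aᵀ m) m
          + iprod m (mulVecE A m) • (1 : Mat d))
        + s ^ 2 * specNorm (A.trace • (1 : Mat d) + Aᵀ) := by
        refine (specNorm_add_le _ _).trans_eq ?_
        rw [specNorm_smul, specNorm_smul, abs_of_nonneg hs, abs_of_nonneg (sq_nonneg s)]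
    _ ≤ _ := by gcongr

lemma mulVecE_outer_add_smul_one (a w : Vec d) (c : ℝ) :
    mulVecE (outer a a + c • 1) w = iprod a w • a + c • w := by
  ext i
  simp only [mulVecE, Matrix.ofLp_toEuclideanCLM, Matrix.add_mulVec, Matrix.smul_mulVec,
    Matrix.one_mulVec, outer, toVec', Matrix.vecMulVec_mulVec]
  simp [iprod, PiLp.inner_apply, dotProduct, mul_comm]

lemma trace_outer (a b : Vec d) : (outer a b).trace = iprod a b := by
  simp [outer, toVec', Matrix.trace_vecMulVec, iprod, PiLp.inner_apply, dotProduct, mul_comm]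

lemma isProbabilityMeasure_smul_add_smul {α : Type*} [MeasurableSpace α] {μ ν : Measure α}
    [IsProbabilityMeasure μ] [IsProbabilityMeasure ν] {a b : ℝ≥0∞} (hab : a + b = 1) :
    IsProbabilityMeasure (a • μ + b • ν) :=
  ⟨by simp [hab]⟩

/-- Example 4.1: signal–noise separation; the model parameters are
V = O(dσ²) and γ² = O(σ²). -/
theorem statement_17 :
    ∃ C : ℝ, 0 < C ∧
      ∀ (d : ℕ) (v : Vec d) (σ : ℝ), 1 ≤ d → ‖v‖ = 1 → σ ∈ Set.Ioc (0 : ℝ) 1 →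
        (let noise : Measure (Vec d) := (stdGaussianE d).map fun x => σ • x
         let P : Measure (Vec d) :=
           (2 : ℝ≥0∞)⁻¹ • (noise.map fun x => v + x) +
             (2 : ℝ≥0∞)⁻¹ • (noise.map fun x => -v + x)
         let SP : Mat d := outer v v + σ ^ 2 • (1 : Mat d)
         -- covariance Σ = v vᵀ + σ² I with its spectral structure
         covMatrix P = SP ∧
           mulVecE SP v = (1 + σ ^ 2) • v ∧
           (∀ u : Vec d, iprod u v = 0 → mulVecE SP u = σ ^ 2 • u) ∧
           -- V = O(dσ²)
           specNorm (matExp P fun x => (outer x x - SP) * (outer x x - SP)ᵀ) ≤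
             C * d * σ ^ 2 ∧
           -- γ² = O(σ²)
           ∀ u : Vec d, ‖u‖ = 1 →
             specNorm (matExp P fun x =>
               (outer x x - SP) * outer u u * (outer x x - SP)ᵀ) ≤ C * σ ^ 2) := by
  refine ⟨6, by norm_num, fun d v σ hd hv ⟨_, hσ₁⟩ => ?_⟩
  intro noise P SP
  have hP : P = (2 : ℝ≥0∞)⁻¹ • gaussianVec v (.mk (σ ^ 2) (sq_nonneg σ))
      + (2 : ℝ≥0∞)⁻¹ • gaussianVec (-v) (.mk (σ ^ 2) (sq_nonneg σ)) := by
    simp only [P, noise, map_add_map_smul_stdGaussianE]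
  have : IsProbabilityMeasure P :=
    hP ▸ isProbabilityMeasure_smul_add_smul ENNReal.inv_two_add_inv_two
  have hmom : HasGaussianEvenMoments P v (σ ^ 2) :=
    hP ▸ (hasGaussianEvenMoments_gaussianVec v _).smul_add_smul
      (hasGaussianEvenMoments_gaussianVec (-v) _).of_neg ENNReal.inv_two_add_inv_two
  have hσ2 : σ ^ 2 ≤ 1 := by nlinarith
  have hd' : (1 : ℝ) ≤ d := by exact_mod_cast hd
  refine ⟨hmom.covMatrix_eq, ?_, fun u hu => ?_, ?_, fun u hu => ?_⟩
  · rw [mulVecE_outer_add_smul_one, iprod, real_inner_self_eq_norm_sq, hv, one_pow, add_smul,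
      one_smul]
  · rw [mulVecE_outer_add_smul_one, iprod, real_inner_comm, ← iprod, hu, zero_smul, zero_add]
  · have h := hmom.matExp_sandwich 1
    simp only [Matrix.mul_one] at h
    rw [h]
    refine (specNorm_gaussianSandwich_le 1 hv (sq_nonneg σ)).trans ?_
    rw [Matrix.trace_one, Fintype.card_fin, abs_of_nonneg (Nat.cast_nonneg d)]
    nlinarith [specNorm_one_le (d := d), mul_le_mul_of_nonneg_left hσ2 (sq_nonneg σ)]
  · rw [hmom.matExp_sandwich]
    refine (specNorm_gaussianSandwich_le _ hv (sq_nonneg σ)).trans ?_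
    rw [trace_outer, iprod, real_inner_self_eq_norm_sq, specNorm_outer, hu, one_pow, abs_one,
      one_mul]
    nlinarith [mul_le_mul_of_nonneg_left hσ2 (sq_nonneg σ)]
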